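/- Let Ω₀ ⊂ ℝ³ be an open convex cone whose tangent cone at the origin contains no lines (the origin is a vertex), and suppose Ω₀ ⊂ W₁ := {x ∈ ℝ³ : x₃ ≥ b|x₂|} for some b > 0. Then there exists a > 0 such that, with C_{a,b} = {x ∈ ℝ³ : x₃ ≥ max(a|x₁|, b|x₂|)}, either Ω₀ ∩ {x₁ ≥ 0} ⊂ C_{a,b} ∩ {x₁ ≥ 0} or Ω₀ ∩ {x₁ ≤ 0} ⊂ C_{a,b} ∩ {x₁ ≤ 0}; in particular ∂Ω₀ cannot contain the whole line {(t,0,0) : t ∈ ℝ}. -/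
import Mathlib


open MeasureTheory Metric Filter Set
open scoped Topology ENNReal Pointwise symmDiff InnerProductSpace NNReal

noncomputable section

/-- Euclidean space `ℝⁿ`. -/
abbrev Euc (n : ℕ) := EuclideanSpace ℝ (Fin n)

/-- Divergence of a vector field `g : ℝⁿ → ℝⁿ`. -/
def divg {n : ℕ} (g : Euc n → Euc n) (x : Euc n) : ℝ :=
  ∑ i, fderiv ℝ g x (EuclideanSpace.single i 1) i

/-- Candidate values for the De Giorgi perimeter `P(F;A)`:
values `∫_{A∩F} div g` over `g ∈ C¹_c(A;ℝⁿ)` with `|g| ≤ 1`. -/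
def perimCandidates {n : ℕ} (F A : Set (Euc n)) : Set ℝ :=
  { p | ∃ g : Euc n → Euc n, ContDiff ℝ 1 g ∧ HasCompactSupport g ∧ tsupport g ⊆ A ∧
      (∀ x, ‖g x‖ ≤ 1) ∧ p = ∫ x in A ∩ F, divg g x }

/-- De Giorgi perimeter of `F` in the open set `A`. -/
def perimeter {n : ℕ} (F A : Set (Euc n)) : ℝ := sSup (perimCandidates F A)

/-- Relative perimeter `P_Ω(F;A) := P(F; A ∩ Ω)`. -/
def relPerimeter {n : ℕ} (Ω F A : Set (Euc n)) : ℝ := perimeter F (A ∩ Ω)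

/-- `F` has locally finite perimeter. -/
def HasLocallyFinitePerimeter {n : ℕ} (F : Set (Euc n)) : Prop :=
  ∀ R : ℝ, 0 < R → BddAbove (perimCandidates F (ball (0 : Euc n) R))

/-- `s ⊂⊂ t`: `s` is compactly contained in `t`. -/
def CompactlyContained {α : Type*} [TopologicalSpace α] (s t : Set α) : Prop :=
  IsCompact (closure s) ∧ closure s ⊆ t

/-- `E` is a local almost-minimizer of the relative perimeter in `Ω`, with remainder
function `ψ` and radius function `rx`. -/
def IsLocalAlmostMinimizer {n : ℕ} (Ω E : Set (Euc n)) (ψ : Euc n → ℝ → ℝ)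
    (rx : Euc n → ℝ) : Prop :=
  ∀ x ∈ closure Ω, 0 < rx x ∧ Tendsto (ψ x) (𝓝[>] (0:ℝ)) (𝓝 0) ∧
    ∀ r : ℝ, 0 < r → r < rx x → ∀ F : Set (Euc n), MeasurableSet F → F ⊆ Ω →
      CompactlyContained (F ∆ E) (ball x r) →
      relPerimeter Ω E (ball x r) ≤ relPerimeter Ω F (ball x r) +
        (volume (F ∆ E)).toReal ^ (((n : ℝ) - 1) / n) * ψ x r

/-- Minimality gap `Ψ_Ω(E;A)`. -/
def minGap {n : ℕ} (Ω E A : Set (Euc n)) : ℝ :=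
  relPerimeter Ω E A - sInf { p : ℝ | ∃ F : Set (Euc n), MeasurableSet F ∧ F ⊆ Ω ∧
    CompactlyContained (F ∆ E) (A ∩ closure Ω) ∧ p = relPerimeter Ω F A }

/-- Tangent cone `T_{x₀}Ω = ⋃_{t>0} t (Ω − x₀)`. -/
def tangCone {n : ℕ} (Ω : Set (Euc n)) (x₀ : Euc n) : Set (Euc n) :=
  ⋃ t ∈ Set.Ioi (0:ℝ), t • ((fun y => y - x₀) '' Ω)

/-- `x₀` is a vertex of `Ω`: it is a boundary point whose tangent cone contains no lines. -/
def IsVertex {n : ℕ} (Ω : Set (Euc n)) (x₀ : Euc n) : Prop :=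
  x₀ ∈ frontier Ω ∧
    ¬ ∃ (p v : Euc n), v ≠ 0 ∧ ∀ t : ℝ, p + t • v ∈ tangCone Ω x₀

/-- `L¹_loc(ℝⁿ)` convergence of a sequence of sets. -/
def TendstoL1loc {n : ℕ} (F : ℕ → Set (Euc n)) (F₀ : Set (Euc n)) : Prop :=
  ∀ R : ℝ, 0 < R →
    Tendsto (fun j => volume ((F j ∆ F₀) ∩ ball (0 : Euc n) R)) atTop (𝓝 0)

/-- `Ω` has Lipschitz boundary: near every boundary point it is the open epigraph of a
Lipschitz function in some direction `v`. -/
def HasLipschitzBoundary {n : ℕ} (Ω : Set (Euc n)) : Prop :=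
  ∀ x ∈ frontier Ω, ∃ (v : Euc n) (r L : ℝ) (f : Euc n → ℝ),
    ‖v‖ = 1 ∧ 0 < r ∧ 0 ≤ L ∧ LipschitzWith (Real.toNNReal L) f ∧
    Ω ∩ ball x r = {y : Euc n | f (y - ⟪y, v⟫_ℝ • v) < ⟪y, v⟫_ℝ} ∩ ball x r

/-- An open Lipschitz cone with vertex at the origin. -/
def IsLipschitzCone {n : ℕ} (Ω₀ : Set (Euc n)) : Prop :=
  IsOpen Ω₀ ∧ (∀ t : ℝ, 0 < t → t • Ω₀ = Ω₀) ∧ HasLipschitzBoundary Ω₀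

/-- Perimeter minimizer in `K` with respect to all balls. -/
def IsPerimMinimizer {m : ℕ} (K G : Set (Euc m)) : Prop :=
  ∀ (x : Euc m) (R : ℝ), 0 < R → ∀ G' : Set (Euc m), MeasurableSet G' → G' ⊆ K →
    CompactlyContained (G' ∆ G) (ball x R ∩ closure K) →
    relPerimeter K G (ball x R) ≤ relPerimeter K G' (ball x R)

/-- Perimeter minimizer in `K` with respect to balls centered at the origin. -/
def IsPerimMinimizer0 {m : ℕ} (K G : Set (Euc m)) : Prop :=
  ∀ R : ℝ, 0 < R → ∀ G' : Set (Euc m), MeasurableSet G' → G' ⊆ K →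
    CompactlyContained (G' ∆ G) (ball (0 : Euc m) R ∩ closure K) →
    relPerimeter K G (ball (0 : Euc m) R) ≤ relPerimeter K G' (ball (0 : Euc m) R)

/-- Candidate values for the total variation of `u` in `A`. -/
def tvCandidates {n : ℕ} (u : Euc n → ℝ) (A : Set (Euc n)) : Set ℝ :=
  { p | ∃ φ : Euc n → Euc n, ContDiff ℝ 1 φ ∧ HasCompactSupport φ ∧ tsupport φ ⊆ A ∧
      (∀ x, ‖φ x‖ ≤ 1) ∧ p = ∫ x in A, u x * divg φ x }

/-- Total variation of `u` in `A`. -/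
def totalVariation {n : ℕ} (u : Euc n → ℝ) (A : Set (Euc n)) : ℝ := sSup (tvCandidates u A)

/-- `u ∈ BV(A)`. -/
def IsBVOn {n : ℕ} (u : Euc n → ℝ) (A : Set (Euc n)) : Prop :=
  IntegrableOn u A volume ∧ BddAbove (tvCandidates u A)

/-- Minimality gap `Ψ_{Ω₀}(f;t)` for functions. -/
def funcMinGap {n : ℕ} (Ω₀ : Set (Euc n)) (f : Euc n → ℝ) (t : ℝ) : ℝ :=
  (∫ x in Ω₀ ∩ ball (0 : Euc n) t, ‖fderiv ℝ f x‖) -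
    sInf { p : ℝ | ∃ g : Euc n → ℝ, IsBVOn g (Ω₀ ∩ ball (0 : Euc n) t) ∧
      IsCompact (closure {x | g x ≠ f x}) ∧
      closure {x | g x ≠ f x} ⊆ ball (0 : Euc n) t ∩ closure Ω₀ ∧
      p = totalVariation g (Ω₀ ∩ ball (0 : Euc n) t) }

/-- Conical extension `f_t` of `f`. -/
def conicalExt {n : ℕ} (f : Euc n → ℝ) (t : ℝ) (x : Euc n) : ℝ :=
  if t < ‖x‖ then f x else f ((t / ‖x‖) • x)

/-- The great circle of the unit sphere in `ℝ³` cut by the plane through `0` normal to `ν`. -/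
def greatCircle (ν : Euc 3) : Set (Euc 3) :=
  sphere (0 : Euc 3) 1 ∩ {x : Euc 3 | ⟪x, ν⟫_ℝ = 0}

/-- An open geodesic arc of the unit sphere of `ℝ³`: a nonempty connected relatively open
subset of a great circle. -/
def IsOpenGeodesicArc (γ : Set (Euc 3)) : Prop :=
  ∃ ν : Euc 3, ν ≠ 0 ∧ IsConnected γ ∧
    ∃ U : Set (Euc 3), IsOpen U ∧ γ = U ∩ greatCircle ν

/-- The pyramid `C_{a,b} = {x ∈ ℝ³ : x₃ ≥ max(a|x₁|, b|x₂|)}`. -/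
def pyramid (a b : ℝ) : Set (Euc 3) :=
  {x : Euc 3 | max (a * |x 0|) (b * |x 1|) ≤ x 2}

/-- The connection function `φ_{h,α}`. -/
def phiHA (h α t : ℝ) : ℝ := ((1 + h) ^ α * t ^ (-α) - 1) / ((1 + h) ^ α - 1)

lemma single_smul3 (c a : ℝ) :
    c • (EuclideanSpace.single (0:Fin 3) a) = EuclideanSpace.single (0:Fin 3) (c*a) := by
  ext i
  simp [EuclideanSpace.single_apply]

lemma mem_closure_smul (Ω₀ : Set (Euc 3)) (hΩcone : ∀ t : ℝ, 0 < t → t • Ω₀ = Ω₀)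
    (t : ℝ) (ht : 0 < t) {x : Euc 3} (hx : x ∈ closure Ω₀) : t • x ∈ closure Ω₀ := by
  have h := image_closure_subset_closure_image (f := fun y : Euc 3 => t • y) (s := Ω₀)
    (continuous_const_smul t)
  have hmem : t • x ∈ (fun y : Euc 3 => t • y) '' closure Ω₀ := ⟨x, hx, rfl⟩
  have h2 := h hmem
  rwa [Set.image_smul, hΩcone t ht] at h2

lemma not_both (Ω₀ : Set (Euc 3)) (hΩopen : IsOpen Ω₀) (hΩconv : Convex ℝ Ω₀)
    (hΩcone : ∀ t : ℝ, 0 < t → t • Ω₀ = Ω₀)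
    (hvertex : ¬ ∃ (p v : Euc 3), v ≠ 0 ∧ ∀ s : ℝ, p + s • v ∈ tangCone Ω₀ 0)
    (hne : Ω₀.Nonempty)
    (h1 : EuclideanSpace.single (0:Fin 3) (1:ℝ) ∈ closure Ω₀)
    (h2 : EuclideanSpace.single (0:Fin 3) (-1:ℝ) ∈ closure Ω₀) : False := by
  obtain ⟨p, hp⟩ := hne
  apply hvertex
  refine ⟨p, EuclideanSpace.single (0:Fin 3) (1:ℝ), ?_, ?_⟩
  · intro h
    have h0 := congrArg (fun v : Euc 3 => v 0) h
    simp [EuclideanSpace.single_apply] at h0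
  · intro s
    have hmem : p + s • EuclideanSpace.single (0:Fin 3) (1:ℝ) ∈ Ω₀ := by
      rcases eq_or_ne s 0 with rfl | hs
      · simpa using hp
      · have hc : (2*s) • EuclideanSpace.single (0:Fin 3) (1:ℝ) ∈ closure Ω₀ := by
          rcases hs.lt_or_gt with hlt | hgt
          · have heq : (2*s) • EuclideanSpace.single (0:Fin 3) (1:ℝ)
                = (-(2*s)) • EuclideanSpace.single (0:Fin 3) (-1:ℝ) := by
              rw [single_smul3, single_smul3]; ring_nf
            rw [heq]
            exact mem_closure_smul Ω₀ hΩcone _ (by linarith) h2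
          · exact mem_closure_smul Ω₀ hΩcone _ (by linarith) h1
        have h2p : (2:ℝ) • p ∈ interior Ω₀ := by
          rw [hΩopen.interior_eq, ← hΩcone 2 (by norm_num)]
          exact Set.smul_mem_smul_set hp
        have hcomb := hΩconv.combo_interior_closure_mem_interior h2p hc
          (a := 1/2) (b := 1/2) one_half_pos one_half_pos.le (by norm_num)
        rw [hΩopen.interior_eq] at hcomb
        have heq2 : (1/2:ℝ) • ((2:ℝ) • p) + (1/2:ℝ) • ((2*s) • EuclideanSpace.single (0:Fin 3) (1:ℝ))
            = p + s • EuclideanSpace.single (0:Fin 3) (1:ℝ) := by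
          module
        rwa [heq2] at hcomb
    simp only [tangCone, Set.mem_iUnion]
    refine ⟨1, Set.mem_Ioi.2 one_pos, ?_⟩
    rw [one_smul]
    exact ⟨_, hmem, by simp⟩


lemma cone_bound (Ω₀ : Set (Euc 3)) (hΩcone : ∀ t : ℝ, 0 < t → t • Ω₀ = Ω₀)
    {b : ℝ} (hb : 0 < b) (hW : Ω₀ ⊆ {x : Euc 3 | b * |x 1| ≤ x 2})
    (σ : ℝ) (hσ : σ = 1 ∨ σ = -1)
    (h : EuclideanSpace.single (0:Fin 3) σ ∉ closure Ω₀) :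
    ∃ a : ℝ, 0 < a ∧ ∀ x ∈ Ω₀, 0 ≤ σ * x 0 → a * |x 0| ≤ x 2 := by
  obtain ⟨ε, hε, hsep⟩ : ∃ ε > 0, ∀ y ∈ Ω₀, ε ≤ dist (EuclideanSpace.single (0:Fin 3) σ) y := by
    by_contra hcon
    push_neg at hcon
    apply h
    rw [Metric.mem_closure_iff]
    intro δ hδ
    obtain ⟨y, hy, hlt⟩ := hcon δ hδ
    exact ⟨y, hy, hlt⟩
  have hsq1 : (0:ℝ) < b^2 + 1 := by positivity
  refine ⟨ε * b / Real.sqrt (b^2+1), by positivity, ?_⟩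
  intro x hx hx0
  rcases (abs_nonneg (x 0)).eq_or_lt with h0 | h0
  · rw [← h0, mul_zero]
    exact le_trans (by positivity) (hW hx)
  · set t : ℝ := |x 0| with ht
    have htpos : 0 < t := h0
    have hty : t⁻¹ • x ∈ Ω₀ := by
      rw [← hΩcone t⁻¹ (by positivity)]
      exact Set.smul_mem_smul_set hx
    set y : Euc 3 := t⁻¹ • x with hy
    have hyi : ∀ i, y i = t⁻¹ * x i := fun i => rfl
    have hx0' : x 0 = σ * t := by
      rcases hσ with rfl | rfl
      · rw [one_mul, ht, abs_of_nonneg (by linarith : (0:ℝ) ≤ x 0)]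
      · rw [ht, abs_of_nonpos (by linarith : x 0 ≤ 0)]; ring
    have hy0 : y 0 = σ := by
      rw [hyi 0, hx0']
      field_simp
    have hy12 : b * |y 1| ≤ y 2 := hW hty
    have hy2 : 0 ≤ y 2 := le_trans (by positivity) hy12
    have hd := hsep y hty
    have hdist : dist (EuclideanSpace.single (0:Fin 3) σ) y ^ 2
        = (σ - y 0)^2 + (y 1)^2 + (y 2)^2 := by
      rw [EuclideanSpace.dist_eq, Real.sq_sqrt (by positivity)]
      simp [Fin.sum_univ_three, EuclideanSpace.single_apply, Real.dist_eq, sq_abs]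
    have hsq : ε^2 ≤ (y 1)^2 + (y 2)^2 := by
      have h2 : ε^2 ≤ dist (EuclideanSpace.single (0:Fin 3) σ) y ^ 2 :=
        pow_le_pow_left₀ hε.le hd 2
      rw [hdist, hy0] at h2
      simpa using h2
    have hb1sq : b^2 * (y 1)^2 ≤ (y 2)^2 := by
      have := mul_self_le_mul_self (by positivity : (0:ℝ) ≤ b * |y 1|) hy12
      nlinarith [sq_abs (y 1)]
    have hsq2 : (ε*b)^2 ≤ (y 2)^2 * (b^2+1) := by
      nlinarith [mul_le_mul_of_nonneg_right hsq (sq_nonneg b)]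
    have key : ε * b ≤ y 2 * Real.sqrt (b^2+1) := by
      calc ε*b = Real.sqrt ((ε*b)^2) := (Real.sqrt_sq (by positivity)).symm
        _ ≤ Real.sqrt ((y 2)^2 * (b^2+1)) := Real.sqrt_le_sqrt hsq2
        _ = y 2 * Real.sqrt (b^2+1) := by
            rw [Real.sqrt_mul (sq_nonneg _), Real.sqrt_sq hy2]
    have hx2 : x 2 = t * y 2 := by
      rw [hyi 2]
      field_simp
    have hsp : 0 < Real.sqrt (b^2+1) := Real.sqrt_pos.2 hsq1
    rw [hx2]
    rw [div_mul_eq_mul_div, div_le_iff₀ hsp]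
    calc ε * b * t ≤ (y 2 * Real.sqrt (b^2+1)) * t := by
          exact mul_le_mul_of_nonneg_right key htpos.le
      _ = t * y 2 * Real.sqrt (b^2+1) := by ring


/-- Step 2 of the proof of Theorem 1.1 (packing-box): a convex cone `Ω₀ ⊂ ℝ³` with vertex
at the origin contained in the wedge `W₁ = {x₃ ≥ b|x₂|}` is contained, on one of the two
half-spaces `{x₁ ≥ 0}`, `{x₁ ≤ 0}`, in a pyramid `C_{a,b}`; in particular `∂Ω₀` cannot
contain the whole line `{(t,0,0)}`. -/
theorem packing_box (Ω₀ : Set (Euc 3))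
    (hΩopen : IsOpen Ω₀) (hΩconv : Convex ℝ Ω₀)
    (hΩcone : ∀ t : ℝ, 0 < t → t • Ω₀ = Ω₀)
    (hvertex : ¬ ∃ (p v : Euc 3), v ≠ 0 ∧ ∀ s : ℝ, p + s • v ∈ tangCone Ω₀ 0)
    (b : ℝ) (hb : 0 < b) (hW : Ω₀ ⊆ {x : Euc 3 | b * |x 1| ≤ x 2}) :
    (∃ a : ℝ, 0 < a ∧
      (Ω₀ ∩ {x : Euc 3 | 0 ≤ x 0} ⊆ pyramid a b ∩ {x : Euc 3 | 0 ≤ x 0} ∨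
       Ω₀ ∩ {x : Euc 3 | x 0 ≤ 0} ⊆ pyramid a b ∩ {x : Euc 3 | x 0 ≤ 0})) ∧
    ¬ (∀ s : ℝ, EuclideanSpace.single (0 : Fin 3) s ∈ frontier Ω₀) := by
  by_cases hne : Ω₀.Nonempty
  · have hnb : ¬ (EuclideanSpace.single (0:Fin 3) (1:ℝ) ∈ closure Ω₀ ∧
        EuclideanSpace.single (0:Fin 3) (-1:ℝ) ∈ closure Ω₀) := fun ⟨ha, hb'⟩ =>
      not_both Ω₀ hΩopen hΩconv hΩcone hvertex hne ha hb'
    constructor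
    · by_cases h1 : EuclideanSpace.single (0:Fin 3) (1:ℝ) ∈ closure Ω₀
      · have h2 : EuclideanSpace.single (0:Fin 3) (-1:ℝ) ∉ closure Ω₀ :=
          fun h => hnb ⟨h1, h⟩
        obtain ⟨a, ha, hbound⟩ := cone_bound Ω₀ hΩcone hb hW (-1) (Or.inr rfl) h2
        refine ⟨a, ha, Or.inr ?_⟩
        rintro x ⟨hxΩ, hx0⟩
        have hx0' : x 0 ≤ 0 := hx0
        refine ⟨?_, hx0⟩
        exact max_le (hbound x hxΩ (by linarith)) (hW hxΩ)
      · obtain ⟨a, ha, hbound⟩ := cone_bound Ω₀ hΩcone hb hW 1 (Or.inl rfl) h1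
        refine ⟨a, ha, Or.inl ?_⟩
        rintro x ⟨hxΩ, hx0⟩
        have hx0' : (0:ℝ) ≤ x 0 := hx0
        refine ⟨?_, hx0⟩
        exact max_le (hbound x hxΩ (by linarith)) (hW hxΩ)
    · intro hall
      exact hnb ⟨frontier_subset_closure (hall 1), frontier_subset_closure (hall (-1))⟩
  · rw [Set.not_nonempty_iff_eq_empty] at hne
    subst hne
    refine ⟨⟨1, one_pos, Or.inl (by simp)⟩, fun h => ?_⟩
    simpa using h 1


end
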